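/- arXiv:0909.1661 — 7 statements merged into one kernel-verified Lean document; each statement's English description precedes it below -/
import Mathlib

section
/- Let d be a nonzero rational number. The splitting field inside ℂ of the cubic polynomial X³ − 4320d²X + 96768d³ over ℚ equals ℚ(√2). (Equivalently, the 2-torsion field ℚ(E[2]) of every quadratic twist E^d : y² = x³ − 4320d²x + 96768d³ of the CM curve E_{8,1} equals ℚ(√2).) -/
/-!
With `s = √2`, the cubic factors as `(x - 48d)(x - (-24 + 36s)d)(x - (-24 - 36s)d)`. Every root
is therefore of the form `a + b√2` with `a, b ∈ ℚ`, and the root `(-24 + 36√2)d` has `b = 36d ≠ 0`,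
so `√2` can be recovered from it.
-/

open Polynomial IntermediateField

theorem cube_sub_4320_mul_add_96768_eq_mul {R : Type*} [CommRing R] {s : R} (hs : s ^ 2 = 2)
    (d x : R) :
    x ^ 3 - 4320 * d ^ 2 * x + 96768 * d ^ 3 =
      (x - 48 * d) * (x - (-24 + 36 * s) * d) * (x - (-24 - 36 * s) * d) := by
  linear_combination (1296 * d ^ 2 * x - 62208 * d ^ 3) * hs

namespace IntermediateField

variable {F E : Type*} [Field F] [Field E] [Algebra F E]

theorem mem_of_algebraMap_add_algebraMap_mul_mem (K : IntermediateField F E) {a b : F}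
    (hb : b ≠ 0) {s : E} (h : algebraMap F E a + algebraMap F E b * s ∈ K) : s ∈ K := by
  have hbs : algebraMap F E b * s ∈ K := by
    simpa using K.sub_mem h (K.algebraMap_mem a)
  have hb' : algebraMap F E b ≠ 0 := (_root_.map_ne_zero _).mpr hb
  simpa [← mul_assoc, inv_mul_cancel₀ hb'] using K.mul_mem (K.algebraMap_mem b⁻¹) hbs

theorem adjoin_eq_adjoin_simple_of_forall_eq_add_mul {S : Set E} {s : E}
    (hS : ∀ x ∈ S, ∃ a b : F, x = algebraMap F E a + algebraMap F E b * s)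
    (hs : ∃ a b : F, b ≠ 0 ∧ algebraMap F E a + algebraMap F E b * s ∈ S) :
    adjoin F S = F⟮s⟯ := by
  apply le_antisymm
  · rw [adjoin_le_iff]
    intro x hx
    obtain ⟨a, b, rfl⟩ := hS x hx
    have hsK : s ∈ F⟮s⟯ := mem_adjoin_simple_self F s
    exact add_mem (algebraMap_mem _ a) (mul_mem (algebraMap_mem _ b) hsK)
  · rw [adjoin_simple_le_iff]
    obtain ⟨a, b, hb, hab⟩ := hs
    exact mem_of_algebraMap_add_algebraMap_mul_mem _ hb (subset_adjoin F S hab)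

end IntermediateField

/-- For every nonzero rational `d`, the splitting field inside `ℂ` of
`X³ − 4320d²X + 96768d³` over `ℚ` (i.e. the 2-torsion field of the quadratic twist
`E^d : y² = x³ − 4320d²x + 96768d³` of the CM curve `E_{8,1}`) equals `ℚ(√2)`. -/
theorem splittingField_two_division_poly_twist_E_8_1 (d : ℚ) (hd : d ≠ 0) :
    IntermediateField.adjoin ℚ
        (((X : ℚ[X]) ^ 3 - C (4320 * d ^ 2) * X + C (96768 * d ^ 3)).rootSet ℂ) =
      IntermediateField.adjoin ℚ {(Real.sqrt 2 : ℂ)} := by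
  have hs : (Real.sqrt 2 : ℂ) ^ 2 = 2 := by exact_mod_cast Real.sq_sqrt zero_le_two
  set s : ℂ := (Real.sqrt 2 : ℂ)
  have hp : (X : ℚ[X]) ^ 3 - C (4320 * d ^ 2) * X + C (96768 * d ^ 3) ≠ 0 :=
    Monic.ne_zero (by monicity!)
  have mem_roots_iff : ∀ x : ℂ, x ∈ ((X : ℚ[X]) ^ 3 - C (4320 * d ^ 2) * X +
      C (96768 * d ^ 3)).rootSet ℂ ↔
        x = 48 * d ∨ x = (-24 + 36 * s) * d ∨ x = (-24 - 36 * s) * d := by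
    intro x
    rw [Polynomial.mem_rootSet, and_iff_right hp]
    simp [cube_sub_4320_mul_add_96768_eq_mul hs, sub_eq_zero, or_assoc]
  have hroot : algebraMap ℚ ℂ (-24 * d) + algebraMap ℚ ℂ (36 * d) * s ∈
      ((X : ℚ[X]) ^ 3 - C (4320 * d ^ 2) * X + C (96768 * d ^ 3)).rootSet ℂ :=
    (mem_roots_iff _).mpr (Or.inr (Or.inl (by simp only [eq_ratCast]; push_cast; ring)))
  refine adjoin_eq_adjoin_simple_of_forall_eq_add_mul (fun x hx => ?_)
    ⟨-24 * d, 36 * d, by positivity, hroot⟩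
  rcases (mem_roots_iff x).mp hx with rfl | rfl | rfl
  · exact ⟨48 * d, 0, by simp only [eq_ratCast]; push_cast; ring⟩
  · exact ⟨-24 * d, 36 * d, by simp only [eq_ratCast]; push_cast; ring⟩
  · exact ⟨-24 * d, -36 * d, by simp only [eq_ratCast]; push_cast; ring⟩
end

section
/- Let d be a nonzero rational number. The splitting field inside ℂ of the cubic polynomial X³ − 595d²X + 5586d³ over ℚ equals ℚ(√7). (Equivalently, the 2-torsion field ℚ(E[2]) of every quadratic twist E^d : y² = x³ − 595d²x + 5586d³ of the CM curve E_{7,2} equals ℚ(√7).) -/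
/-!
Once `s² = 7`, the cubic factors as `(x - 14d)(x - (-7 + 8s)d)(x - (-7 - 8s)d)`: one rational
root and a pair of conjugates in `ℚ(√7)`. The conjugate root `(-7 + 8√7)d` alone already
generates `ℚ(√7)` because `d ≠ 0`.
-/

open Polynomial IntermediateField

section

variable {F K : Type*} [Field F] [Field K] [Algebra F K]

theorem algebraMap_add_algebraMap_mul_mem_adjoin_simple (s : K) (a b : F) :
    algebraMap F K a + algebraMap F K b * s ∈ F⟮s⟯ :=
  add_mem (IntermediateField.algebraMap_mem _ a)
    (mul_mem (IntermediateField.algebraMap_mem _ b) (mem_adjoin_simple_self F s))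

theorem adjoin_simple_algebraMap_add_algebraMap_mul (s : K) (a : F) {b : F} (hb : b ≠ 0) :
    F⟮algebraMap F K a + algebraMap F K b * s⟯ = F⟮s⟯ := by
  refine le_antisymm (adjoin_simple_le_iff.2 ?_) (adjoin_simple_le_iff.2 ?_)
  · exact algebraMap_add_algebraMap_mul_mem_adjoin_simple s a b
  · set t := algebraMap F K a + algebraMap F K b * s with ht
    have hs : s = algebraMap F K (-a / b) + algebraMap F K b⁻¹ * t := by
      have hb' : algebraMap F K b ≠ 0 := (_root_.map_ne_zero _).2 hb
      simp only [ht, map_div₀, map_neg, map_inv₀]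
      field_simp
      ring
    rw [hs]
    exact algebraMap_add_algebraMap_mul_mem_adjoin_simple _ _ _

theorem adjoin_algebraMap_add_sub_mul_eq_adjoin_simple (s : K) (a c : F) {b : F} (hb : b ≠ 0) :
    adjoin F {algebraMap F K c, algebraMap F K a + algebraMap F K b * s,
      algebraMap F K a - algebraMap F K b * s} = F⟮s⟯ := by
  refine le_antisymm (adjoin_le_iff.2 ?_) ?_
  · rintro x (rfl | rfl | rfl)
    · exact IntermediateField.algebraMap_mem _ c
    · exact algebraMap_add_algebraMap_mul_mem_adjoin_simple s a b
    · simpa [sub_eq_add_neg] using algebraMap_add_algebraMap_mul_mem_adjoin_simple s a (-b)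
  · rw [← adjoin_simple_algebraMap_add_algebraMap_mul s a hb, adjoin_simple_le_iff]
    exact subset_adjoin F _ (by simp)

theorem cubic_twist_E_7_2_eq_mul {R : Type*} [CommRing R] {s : R} (hs : s ^ 2 = 7) (d x : R) :
    x ^ 3 - 595 * d ^ 2 * x + 5586 * d ^ 3 =
      (x - 14 * d) * (x - (-7 * d + 8 * d * s)) * (x - (-7 * d - 8 * d * s)) := by
  linear_combination (64 * d ^ 2 * x - 896 * d ^ 3) * hs

theorem rootSet_cubic_twist_E_7_2 (d : F) {s : K} (hs : s ^ 2 = 7) :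
    ((X : F[X]) ^ 3 - C (595 * d ^ 2) * X + C (5586 * d ^ 3)).rootSet K =
      {algebraMap F K (14 * d), algebraMap F K (-7 * d) + algebraMap F K (8 * d) * s,
        algebraMap F K (-7 * d) - algebraMap F K (8 * d) * s} := by
  have hp : ((X : F[X]) ^ 3 - C (595 * d ^ 2) * X + C (5586 * d ^ 3)).Monic := by monicity!
  ext x
  rw [mem_rootSet_of_ne hp.ne_zero]
  simp only [map_add, map_sub, map_mul, map_pow, aeval_X, aeval_C, map_ofNat, map_neg,
    cubic_twist_E_7_2_eq_mul hs, mul_eq_zero, sub_eq_zero, Set.mem_insert_iff,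
    Set.mem_singleton_iff]
  tauto

end

/-- For every nonzero rational `d`, the splitting field inside `ℂ` of
`X³ − 595d²X + 5586d³` over `ℚ` (i.e. the 2-torsion field of the quadratic twist
`E^d : y² = x³ − 595d²x + 5586d³` of the CM curve `E_{7,2}`) equals `ℚ(√7)`. -/
theorem splittingField_two_division_poly_twist_E_7_2 (d : ℚ) (hd : d ≠ 0) :
    IntermediateField.adjoin ℚ
        (((X : ℚ[X]) ^ 3 - C (595 * d ^ 2) * X + C (5586 * d ^ 3)).rootSet ℂ) =
      IntermediateField.adjoin ℚ {(Real.sqrt 7 : ℂ)} := by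
  have hs : (Real.sqrt 7 : ℂ) ^ 2 = 7 := by
    exact_mod_cast Real.sq_sqrt (by norm_num : (0 : ℝ) ≤ 7)
  rw [rootSet_cubic_twist_E_7_2 d hs]
  exact adjoin_algebraMap_add_sub_mul_eq_adjoin_simple _ _ _ (mul_ne_zero (by norm_num) hd)
end

section
/- Let d be a nonzero rational number and let E be the elliptic curve over ℚ given by y² = x³ − 9504d²x + 365904d³ (a quadratic twist of the CM curve E_{11,1}). Let F be a number field that is Galois over ℚ and such that √−11 ∉ F. Then E(F)[2] is trivial: the only point P ∈ E(F) with 2P = O is P = O. -/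
/-!
The `x`-coordinate of a nontrivial 2-torsion point of `E^d` over `F` is a root of the 2-torsion
cubic `4 (X³ − 9504 d² X + 365904 d³)`, which is irreducible over `ℚ` because
`X³ − 9504 X + 365904` has no root modulo 5. Since `F / ℚ` is normal, the cubic splits in `F`, so
its discriminant `16 Δ = −11 (16 · 128304 · d³)²` is a square in `F`, i.e. `√−11 ∈ F`.
-/

open WeierstrassCurve WeierstrassCurve.Affine Polynomial

theorem Polynomial.Monic.aeval_rat_ne_zero_of_forall_zmod {f : ℤ[X]} (hf : f.Monic) {n : ℕ}
    (hn : ∀ z : ZMod n, aeval z f ≠ 0) (r : ℚ) : aeval r f ≠ 0 := by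
  intro hr
  obtain ⟨m, rfl⟩ := isInteger_of_is_root_of_monic hf hr
  apply hn m
  rw [aeval_algebraMap_apply_eq_algebraMap_eval, algebraMap_int_eq, eq_intCast,
    Int.cast_eq_zero] at hr
  rw [← eq_intCast (algebraMap ℤ (ZMod n)), aeval_algebraMap_apply_eq_algebraMap_eval, hr, map_zero]

namespace WeierstrassCurve.Affine.Point

variable {F : Type*} [Field F] [DecidableEq F] {W : Affine F}

theorem eval_Ψ₂Sq_eq_zero_of_two_smul_eq_zero {x y : F} {h : W.Nonsingular x y}
    (hP : 2 • some x y h = 0) : W.Ψ₂Sq.eval x = 0 := by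
  have hy : y = W.negY x y := by
    by_contra hy
    rw [two_smul, add_self_of_Y_ne hy] at hP
    exact some_ne_zero _ hP
  have heq := (equation_iff x y).mp h.1
  -- `Ψ₂Sq (x) = (y - negY x y)² - 4 (y² + a₁xy + a₃y - (x³ + a₂x² + a₄x + a₆))`
  rw [negY] at hy
  simp only [Ψ₂Sq, b₂, b₄, b₆, eval_add, eval_mul, eval_pow, eval_C, eval_X]
  linear_combination (2 * y + W.a₁ * x + W.a₃) * hy - 4 * heq

end WeierstrassCurve.Affine.Point

theorem Cubic.isSquare_discr_of_irreducible {K L : Type*} [Field K] [Field L] [Algebra K L]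
    [Normal K L] {P : Cubic K} (ha : P.a ≠ 0) (hP : Irreducible P.toPoly) {x : L}
    (hx : aeval x P.toPoly = 0) : IsSquare (algebraMap K L P.discr) := by
  have hsplit : (P.toPoly.map (algebraMap K L)).Splits := by
    rw [minpoly.Irreducible.eq_minpoly hP hx, Polynomial.map_mul, map_C]
    exact (Normal.splits inferInstance x).C_mul _
  obtain ⟨u, v, w, h3⟩ := (splits_iff_roots_eq_three ha).mp hsplit
  exact ⟨_, (discr_eq_prod_three_roots ha h3).trans (sq _)⟩

theorem cubic_E_11_1_ne_zero (t : ℚ) : t ^ 3 - 9504 * t + 365904 ≠ 0 := by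
  have hmonic : (X ^ 3 - 9504 * X + 365904 : ℤ[X]).Monic := by monicity!
  have hmod5 : ∀ z : ZMod 5, aeval z (X ^ 3 - 9504 * X + 365904 : ℤ[X]) ≠ 0 := by
    simp only [map_add, map_sub, map_mul, map_pow, aeval_X, map_ofNat]
    decide
  simpa only [map_add, map_sub, map_mul, map_pow, aeval_X, map_ofNat] using
    hmonic.aeval_rat_ne_zero_of_forall_zmod hmod5 t

def twistE111 (d : ℚ) : WeierstrassCurve ℚ :=
  ⟨0, 0, 0, -9504 * d ^ 2, 365904 * d ^ 3⟩

theorem irreducible_twistE111_twoTorsionPolynomial {d : ℚ} (hd : d ≠ 0) :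
    Irreducible (twistE111 d).twoTorsionPolynomial.toPoly := by
  refine irreducible_of_degree_le_three_of_not_isRoot ?_ fun r hr ↦ cubic_E_11_1_ne_zero (r / d) ?_
  · rw [Cubic.natDegree_of_a_ne_zero (by norm_num [twoTorsionPolynomial])]
    decide
  · rw [IsRoot.def, ← Ψ₂Sq_eq] at hr
    simp only [Ψ₂Sq, b₂, b₄, b₆, twistE111, eval_add, eval_mul, eval_C, eval_pow, eval_X] at hr
    field_simp
    linear_combination hr / 4

theorem discr_twoTorsionPolynomial_twistE111 (d : ℚ) :
    (twistE111 d).twoTorsionPolynomial.discr = -11 * (16 * 128304 * d ^ 3) ^ 2 := by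
  simp only [twoTorsionPolynomial_discr, twistE111, Δ, b₂, b₄, b₆, b₈]
  ring

open Classical in
/-- For a nonzero rational `d`, the quadratic twist `E^d : y² = x³ − 9504d²x + 365904d³`
of the CM curve `E_{11,1}` has trivial 2-torsion over any Galois number field `F`
not containing `√−11`. -/
theorem twoTorsion_trivial_twist_E_11_1 (d : ℚ) (hd : d ≠ 0)
    (E : WeierstrassCurve ℚ) (hE : E = ⟨0, 0, 0, -9504 * d ^ 2, 365904 * d ^ 3⟩)
    (F : Type) [Field F] [NumberField F] [IsGalois ℚ F]
    (hF : ¬∃ x : F, x ^ 2 = -11)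
    (P : (E.baseChange F).toAffine.Point) (hP : 2 • P = 0) : P = 0 := by
  rcases P with _ | ⟨x, y, h⟩
  · rfl
  have hx : aeval x E.twoTorsionPolynomial.toPoly = 0 := by
    rw [← Ψ₂Sq_eq, aeval_def, ← eval_map, ← map_Ψ₂Sq]
    exact Point.eval_Ψ₂Sq_eq_zero_of_two_smul_eq_zero hP
  subst hE
  obtain ⟨s, hs⟩ := Cubic.isSquare_discr_of_irreducible (by norm_num [twoTorsionPolynomial])
    (irreducible_twistE111_twoTorsionPolynomial hd) hx
  rw [discr_twoTorsionPolynomial_twistE111] at hs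
  have hc : algebraMap ℚ F (16 * 128304 * d ^ 3) ≠ 0 := by simp [hd]
  refine (hF ⟨s / algebraMap ℚ F (16 * 128304 * d ^ 3), ?_⟩).elim
  rw [div_pow, div_eq_iff (pow_ne_zero 2 hc), sq s, ← hs, map_mul, map_neg, map_pow, map_ofNat]
end

section
/- Let E be the elliptic curve over ℚ given by y² = x³ − 9504x + 365904 (the CM curve E_{11,1}) and let ζ = e^{2πi/11}. There exists a point P = (x₀, y₀) ∈ E(ℂ) of exact order 11 such that ℚ(x₀, y₀) = ℚ(ζ + ζ⁻¹), the maximal real subfield of the 11th cyclotomic field. -/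
open WeierstrassCurve WeierstrassCurve.Affine

/-!
For `c = ζ + ζ⁻¹`, which satisfies `c⁵ + c⁴ - 4c³ - 3c² + 3c + 1 = 0`, the point
`P = (-84 + 36c + 180c² - 36c⁴, -756 + 432c + 1080c² - 432c³ - 432c⁴)` lies on `E_{11,1}`.
Computing `2P`, `4P = 2(2P)`, `5P = 4P + P` with the chord-and-tangent formulas, all coordinates
stay in `ℚ[c]` and `5P + P = -5P`, so `11P = 0` and `P` has order `11`. Its `x`-coordinate is
itself a primitive element of `ℚ(c)`: `c` is an explicit rational polynomial in it.
-/

theorem IsPrimitiveRoot.add_inv_quintic_eq_zero {K : Type*} [Field K] {ζ : K}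
    (hζ : IsPrimitiveRoot ζ 11) :
    (ζ + ζ⁻¹) ^ 5 + (ζ + ζ⁻¹) ^ 4 - 4 * (ζ + ζ⁻¹) ^ 3 - 3 * (ζ + ζ⁻¹) ^ 2
      + 3 * (ζ + ζ⁻¹) + 1 = 0 := by
  have hζ0 : ζ ≠ 0 := hζ.ne_zero (by norm_num)
  have hΦ : ∑ i ∈ Finset.range 11, ζ ^ i = 0 := hζ.geom_sum_eq_zero (by norm_num)
  have key : ζ ^ 5 * ((ζ + ζ⁻¹) ^ 5 + (ζ + ζ⁻¹) ^ 4 - 4 * (ζ + ζ⁻¹) ^ 3 - 3 * (ζ + ζ⁻¹) ^ 2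
      + 3 * (ζ + ζ⁻¹) + 1) = ∑ i ∈ Finset.range 11, ζ ^ i := by
    simp only [Finset.sum_range_succ, Finset.sum_range_zero]
    field_simp
    ring
  exact (mul_eq_zero.mp (key.trans hΦ)).resolve_left (pow_ne_zero 5 hζ0)

namespace WeierstrassCurve.Affine

variable {F : Type*} [Field F] [DecidableEq F] {W : Affine F}

theorem Point.exists_some_add_some_of_X_ne {x₁ y₁ x₂ y₂ ℓ x₃ y₃ : F}
    (h₁ : W.Nonsingular x₁ y₁) (h₂ : W.Nonsingular x₂ y₂) (hx : x₁ ≠ x₂)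
    (hℓ : ℓ * (x₁ - x₂) = y₁ - y₂) (hx₃ : W.addX x₁ x₂ ℓ = x₃)
    (hy₃ : W.negY x₃ (ℓ * (x₃ - x₁) + y₁) = y₃) :
    ∃ h₃ : W.Nonsingular x₃ y₃, Point.some _ _ h₁ + Point.some _ _ h₂ = Point.some _ _ h₃ := by
  obtain rfl : W.slope x₁ x₂ y₁ y₂ = ℓ := by
    rw [slope_of_X_ne hx, div_eq_iff (sub_ne_zero.mpr hx), hℓ]
  subst hx₃ hy₃
  exact ⟨_, Point.add_of_X_ne hx⟩

theorem Point.exists_some_add_self {x₁ y₁ ℓ x₃ y₃ : F}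
    (h₁ : W.Nonsingular x₁ y₁) (hy : y₁ ≠ W.negY x₁ y₁)
    (hℓ : ℓ * (y₁ - W.negY x₁ y₁) = 3 * x₁ ^ 2 + 2 * W.a₂ * x₁ + W.a₄ - W.a₁ * y₁)
    (hx₃ : W.addX x₁ x₁ ℓ = x₃) (hy₃ : W.negY x₃ (ℓ * (x₃ - x₁) + y₁) = y₃) :
    ∃ h₃ : W.Nonsingular x₃ y₃, Point.some _ _ h₁ + Point.some _ _ h₁ = Point.some _ _ h₃ := by
  obtain rfl : W.slope x₁ x₁ y₁ y₁ = ℓ := by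
    rw [slope_of_Y_ne rfl hy, div_eq_iff (sub_ne_zero.mpr hy), hℓ]
  subst hx₃ hy₃
  exact ⟨_, Point.add_self_of_Y_ne hy⟩

end WeierstrassCurve.Affine

namespace E11

def curve (K : Type*) [Field K] : WeierstrassCurve K := ⟨0, 0, 0, -9504, 365904⟩

theorem baseChange_curve (K : Type*) [Field K] [CharZero K] :
    (curve ℚ).baseChange K = curve K := by
  ext <;> simp [curve, WeierstrassCurve.baseChange, WeierstrassCurve.map]

variable {K : Type*} [Field K]

-- the coordinates of `P`, `2P`, `4P` and `5P`
def x₁ (c : K) : K := -84 + 36 * c + 180 * c ^ 2 - 36 * c ^ 4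
def y₁ (c : K) : K := -756 + 432 * c + 1080 * c ^ 2 - 432 * c ^ 3 - 432 * c ^ 4
def x₂ (c : K) : K := 168 - 180 * c - 252 * c ^ 2 + 72 * c ^ 3 + 72 * c ^ 4
def y₂ (c : K) : K := 2484 - 648 * c - 2160 * c ^ 2 + 216 * c ^ 3 + 432 * c ^ 4
def x₄ (c : K) : K := 96 + 108 * c + 72 * c ^ 2 - 36 * c ^ 3 - 36 * c ^ 4
def y₄ (c : K) : K := -324 - 2376 * c - 1296 * c ^ 2 + 864 * c ^ 3 + 432 * c ^ 4
def x₅ (c : K) : K := 24 - 72 * c + 108 * c ^ 2 - 36 * c ^ 4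
def y₅ (c : K) : K := 324 + 864 * c - 2376 * c ^ 2 - 216 * c ^ 3 + 648 * c ^ 4

variable [CharZero K] {c : K}

-- Bézout certificates: each difference is invertible modulo the quintic.
theorem y₁_ne_zero (hc : c ^ 5 + c ^ 4 - 4 * c ^ 3 - 3 * c ^ 2 + 3 * c + 1 = 0) : y₁ c ≠ 0 :=
  fun h => one_ne_zero (α := K) <| by
    unfold y₁ at h
    linear_combination (-5 / 1188 - 1 / 99 * c + 1 / 594 * c ^ 2 + 1 / 297 * c ^ 3 : K) * h
      + (-24 / 11 + 8 / 11 * c + 16 / 11 * c ^ 2) * hc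

theorem y₂_ne_zero (hc : c ^ 5 + c ^ 4 - 4 * c ^ 3 - 3 * c ^ 2 + 3 * c + 1 = 0) : y₂ c ≠ 0 :=
  fun h => one_ne_zero (α := K) <| by
    unfold y₂ at h
    linear_combination (1 / 1188 + 1 / 594 * c - 1 / 594 * c ^ 3 : K) * h
      + (-12 / 11 - 4 / 11 * c + 8 / 11 * c ^ 2) * hc

theorem x₄_ne_x₁ (hc : c ^ 5 + c ^ 4 - 4 * c ^ 3 - 3 * c ^ 2 + 3 * c + 1 = 0) : x₄ c ≠ x₁ c :=
  fun h => one_ne_zero (α := K) <| by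
    unfold x₄ x₁ at h
    linear_combination
      (7 / 396 + 5 / 198 * c - 5 / 99 * c ^ 2 - 1 / 198 * c ^ 3 + 5 / 396 * c ^ 4 : K) * h
      + (-24 / 11 + 8 / 11 * c + 5 / 11 * c ^ 2) * hc

theorem x₅_ne_x₁ (hc : c ^ 5 + c ^ 4 - 4 * c ^ 3 - 3 * c ^ 2 + 3 * c + 1 = 0) : x₅ c ≠ x₁ c :=
  fun h => one_ne_zero (α := K) <| by
    unfold x₅ x₁ at h
    linear_combination
      (-13 / 396 * c - 2 / 99 * c ^ 2 + 1 / 99 * c ^ 3 + 1 / 132 * c ^ 4 : K) * h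
      + (1 + 6 / 11 * c) * hc

theorem ne_negY_of_ne_zero {x y : K} (hy : y ≠ 0) : y ≠ (curve K).toAffine.negY x y := by
  simp only [negY, curve]
  contrapose! hy
  linear_combination hy / 2

theorem nonsingular_P₁ (hc : c ^ 5 + c ^ 4 - 4 * c ^ 3 - 3 * c ^ 2 + 3 * c + 1 = 0) :
    (curve K).toAffine.Nonsingular (x₁ c) (y₁ c) := by
  refine (nonsingular_iff _ _).mpr
    ⟨(equation_iff _ _).mpr ?_, .inr (ne_negY_of_ne_zero (y₁_ne_zero hc))⟩
  simp only [curve, x₁, y₁]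
  linear_combination
    (-1073088 * c + 1586304 * c ^ 3 + 279936 * c ^ 4 - 466560 * c ^ 5 - 46656 * c ^ 6
      + 46656 * c ^ 7) * hc

theorem eq_poly_x₁ (hc : c ^ 5 + c ^ 4 - 4 * c ^ 3 - 3 * c ^ 2 + 3 * c + 1 = 0) :
    c = -586 / 81 + 269 / 972 * x₁ c - 1 / 1944 * x₁ c ^ 2 - 71 / 1539648 * x₁ c ^ 3
      + 1 / 4618944 * x₁ c ^ 4 := by
  unfold x₁
  linear_combination (-4 + 589 / 11 * c + 42 / 11 * c ^ 2 - 124 * c ^ 3 - 142 / 11 * c ^ 4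
    + 1030 / 11 * c ^ 5 + 129 / 11 * c ^ 6 - 357 / 11 * c ^ 7 - 40 / 11 * c ^ 8 + 60 / 11 * c ^ 9
    + 4 / 11 * c ^ 10 - 4 / 11 * c ^ 11) * hc

theorem adjoin_x₁_y₁ (hc : c ^ 5 + c ^ 4 - 4 * c ^ 3 - 3 * c ^ 2 + 3 * c + 1 = 0) :
    IntermediateField.adjoin ℚ {x₁ c, y₁ c} = IntermediateField.adjoin ℚ {c} := by
  apply le_antisymm
  · rw [IntermediateField.adjoin_le_iff, Set.insert_subset_iff, Set.singleton_subset_iff]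
    have hc' : c ∈ IntermediateField.adjoin ℚ {c} := IntermediateField.mem_adjoin_simple_self ℚ c
    generalize IntermediateField.adjoin ℚ {c} = S at hc' ⊢
    unfold x₁ y₁
    constructor <;> apply_rules [add_mem, sub_mem, mul_mem, pow_mem, neg_mem, ofNat_mem]
  · rw [IntermediateField.adjoin_simple_le_iff]
    have hx : x₁ c ∈ IntermediateField.adjoin ℚ {x₁ c, y₁ c} :=
      IntermediateField.subset_adjoin _ _ (Set.mem_insert _ _)
    generalize IntermediateField.adjoin ℚ {x₁ c, y₁ c} = S at hx ⊢
    rw [eq_poly_x₁ hc]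
    apply_rules [add_mem, sub_mem, mul_mem, pow_mem, neg_mem, div_mem, ofNat_mem, one_mem]

variable [DecidableEq K]

theorem exists_P₁_add_P₁ (hc : c ^ 5 + c ^ 4 - 4 * c ^ 3 - 3 * c ^ 2 + 3 * c + 1 = 0) :
    ∃ h₂ : (curve K).toAffine.Nonsingular (x₂ c) (y₂ c),
      Point.some _ _ (nonsingular_P₁ hc) + Point.some _ _ (nonsingular_P₁ hc) = Point.some _ _ h₂ :=
  Point.exists_some_add_self (ℓ := -6 + 6 * c + 18 * c ^ 2 - 6 * c ^ 3 - 6 * c ^ 4)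
    (nonsingular_P₁ hc) (ne_negY_of_ne_zero (y₁_ne_zero hc))
    (by simp only [negY, curve, x₁, y₁]
        linear_combination (-2592 + 11664 * c + 9072 * c ^ 2 + 1296 * c ^ 3) * hc)
    (by simp only [addX, curve, x₁, x₂]
        linear_combination (36 - 72 * c + 36 * c ^ 2 + 36 * c ^ 3) * hc)
    (by simp only [negY, curve, x₁, y₁, x₂, y₂]
        linear_combination (-216 - 1944 * c + 432 * c ^ 2 + 648 * c ^ 3) * hc)

theorem exists_P₂_add_P₂ (hc : c ^ 5 + c ^ 4 - 4 * c ^ 3 - 3 * c ^ 2 + 3 * c + 1 = 0)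
    (h₂ : (curve K).toAffine.Nonsingular (x₂ c) (y₂ c)) :
    ∃ h₄ : (curve K).toAffine.Nonsingular (x₄ c) (y₄ c),
      Point.some _ _ h₂ + Point.some _ _ h₂ = Point.some _ _ h₄ :=
  Point.exists_some_add_self (ℓ := 24 - 30 * c ^ 2 + 6 * c ^ 4)
    h₂ (ne_negY_of_ne_zero (y₂_ne_zero hc))
    (by simp only [negY, curve, x₂, y₂]
        linear_combination (44064 + 18144 * c - 18144 * c ^ 2 - 10368 * c ^ 3) * hc)
    (by simp only [addX, curve, x₂, x₄]
        linear_combination (144 - 180 * c - 36 * c ^ 2 + 36 * c ^ 3) * hc)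
    (by simp only [negY, curve, x₂, y₂, x₄, y₄]
        linear_combination (-432 - 2592 * c + 648 * c ^ 3) * hc)

theorem exists_P₄_add_P₁ (hc : c ^ 5 + c ^ 4 - 4 * c ^ 3 - 3 * c ^ 2 + 3 * c + 1 = 0)
    (h₄ : (curve K).toAffine.Nonsingular (x₄ c) (y₄ c)) :
    ∃ h₅ : (curve K).toAffine.Nonsingular (x₅ c) (y₅ c),
      Point.some _ _ h₄ + Point.some _ _ (nonsingular_P₁ hc) = Point.some _ _ h₅ :=
  Point.exists_some_add_some_of_X_ne (ℓ := -24 * c + 6 * c ^ 3)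
    h₄ (nonsingular_P₁ hc) (x₄_ne_x₁ hc)
    (by simp only [x₄, x₁, y₄, y₁]
        linear_combination (-432 - 216 * c) * hc)
    (by simp only [addX, curve, x₄, x₁, x₅]
        linear_combination (-36 + 36 * c) * hc)
    (by simp only [negY, curve, x₄, y₄, x₅, y₅]
        linear_combination (-216 * c) * hc)

theorem P₅_add_P₁ (hc : c ^ 5 + c ^ 4 - 4 * c ^ 3 - 3 * c ^ 2 + 3 * c + 1 = 0)
    (h₅ : (curve K).toAffine.Nonsingular (x₅ c) (y₅ c)) :
    Point.some _ _ h₅ + Point.some _ _ (nonsingular_P₁ hc) = -Point.some _ _ h₅ := by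
  obtain ⟨h₆, hP₆⟩ := Point.exists_some_add_some_of_X_ne
    (ℓ := 12 + 18 * c - 24 * c ^ 2 - 6 * c ^ 3 + 6 * c ^ 4) (x₃ := x₅ c)
    (y₃ := (curve K).toAffine.negY (x₅ c) (y₅ c))
    h₅ (nonsingular_P₁ hc) (x₅_ne_x₁ hc)
    (by simp only [x₅, x₁, y₅, y₁]
        linear_combination (216 - 432 * c) * hc)
    (by simp only [addX, curve, x₅, x₁]
        linear_combination (180 - 108 * c ^ 2 + 36 * c ^ 3) * hc)
    (by rw [sub_self, mul_zero, zero_add])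
  rw [hP₆, Point.neg_some]

theorem addOrderOf_P₁ (hc : c ^ 5 + c ^ 4 - 4 * c ^ 3 - 3 * c ^ 2 + 3 * c + 1 = 0) :
    addOrderOf (Point.some _ _ (nonsingular_P₁ hc)) = 11 := by
  set P := Point.some _ _ (nonsingular_P₁ hc)
  obtain ⟨h₂, hP₂⟩ := exists_P₁_add_P₁ hc
  obtain ⟨h₄, hP₄⟩ := exists_P₂_add_P₂ hc h₂
  obtain ⟨h₅, hP₅⟩ := exists_P₄_add_P₁ hc h₄
  have h11 : 11 • P = 0 :=
    calc 11 • P = (P + P + (P + P) + P + P) + (P + P + (P + P) + P) := by abel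
      _ = 0 := by rw [hP₂, hP₄, hP₅, P₅_add_P₁ hc h₅, neg_add_cancel]
  have : Fact (Nat.Prime 11) := ⟨by norm_num⟩
  exact addOrderOf_eq_prime h11 (Point.some_ne_zero _)

end E11

/-- The CM curve `E_{11,1} : y² = x³ − 9504x + 365904` has a point `P = (x₀, y₀)` of
exact order `11` whose coordinates generate the maximal real subfield
`ℚ(ζ + ζ⁻¹)` of the 11th cyclotomic field, where `ζ = e^{2πi/11}`. -/
theorem eleven_torsion_field_E_11_1
    (E : WeierstrassCurve ℚ) (hE : E = ⟨0, 0, 0, -9504, 365904⟩)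
    (ζ : ℂ) (hζ : ζ = Complex.exp (2 * Real.pi * Complex.I / 11)) :
    ∃ (x₀ y₀ : ℂ) (h : (E.baseChange ℂ).toAffine.Nonsingular x₀ y₀),
      addOrderOf (Point.some x₀ y₀ h : (E.baseChange ℂ).toAffine.Point) = 11 ∧
      IntermediateField.adjoin ℚ {x₀, y₀} = IntermediateField.adjoin ℚ {ζ + ζ⁻¹} := by
  obtain rfl : E = E11.curve ℚ := hE
  have hc := (hζ ▸ Complex.isPrimitiveRoot_exp 11 (by norm_num)).add_inv_quintic_eq_zero
  rw [E11.baseChange_curve]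
  exact ⟨_, _, E11.nonsingular_P₁ hc, E11.addOrderOf_P₁ hc, E11.adjoin_x₁_y₁ hc⟩
end

section
/- Let E be the elliptic curve over ℚ given by y² = x³ − 2835x − 71442 (the CM curve E_{7,1}) and let ζ = e^{2πi/7}. There exists a point P = (x₀, y₀) ∈ E(ℂ) of exact order 7 such that ℚ(x₀) = ℚ(ζ + ζ⁻¹) and ℚ(x₀, y₀) = ℚ(ζ), the full 7th cyclotomic field; in particular ℚ(√−7) ⊆ ℚ(x₀, y₀). -/
/-!
Let `t` be a root of the cubic `t³ + t² - 2t - 1` (for instance `ζ + ζ⁻¹`) and `g` a square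
root of `-7`. Then `P(t) = (36t - 9, 108tg)` lies on `E_{7,1}`, and the tangent line at `P(t)`
shows `2 • P(t) = P(1 - t - t²)`. The map `t ↦ 1 - t - t²` permutes the roots of the cubic
cyclically, so `8 • P(t) = P(t)` and `P(t)` has order `7`. With `t = ζ + ζ⁻¹` and `g` the
quadratic Gauss sum, `ℚ(t, g) = ℚ(ζ)` because `14ζ = 7t + (6 + t - 2t²)g`.
-/

open WeierstrassCurve WeierstrassCurve.Affine IntermediateField

def E71 (K : Type*) [Field K] : WeierstrassCurve K := ⟨0, 0, 0, -2835, -71442⟩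

namespace E71

variable {K : Type*} [Field K] {t g : K}

lemma cubic_one_sub_sub_sq (ht : t ^ 3 + t ^ 2 - 2 * t - 1 = 0) :
    (1 - t - t ^ 2) ^ 3 + (1 - t - t ^ 2) ^ 2 - 2 * (1 - t - t ^ 2) - 1 = 0 := by
  linear_combination (1 + t - 2 * t ^ 2 - t ^ 3) * ht

lemma ne_zero_of_cubic (ht : t ^ 3 + t ^ 2 - 2 * t - 1 = 0) : t ≠ 0 := by
  rintro rfl
  norm_num at ht

lemma equation (ht : t ^ 3 + t ^ 2 - 2 * t - 1 = 0) (hg : g ^ 2 = -7) :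
    (E71 K).toAffine.Equation (36 * t - 9) (108 * t * g) := by
  rw [equation_iff]
  simp only [E71]
  linear_combination (108 * t) ^ 2 * hg - 46656 * ht

section Point

variable [CharZero K]

lemma ne_negY (ht : t ^ 3 + t ^ 2 - 2 * t - 1 = 0) (hg : g ^ 2 = -7) :
    108 * t * g ≠ (E71 K).toAffine.negY (36 * t - 9) (108 * t * g) := by
  have ht₀ := ne_zero_of_cubic ht
  have hg₀ : g ≠ 0 := by
    rintro rfl
    norm_num at hg
  simp only [negY, E71]
  intro h
  exact mul_ne_zero (mul_ne_zero (by norm_num) ht₀) hg₀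
    (by linear_combination h : 216 * t * g = 0)

lemma nonsingular (ht : t ^ 3 + t ^ 2 - 2 * t - 1 = 0) (hg : g ^ 2 = -7) :
    (E71 K).toAffine.Nonsingular (36 * t - 9) (108 * t * g) := by
  rw [nonsingular_iff]
  exact ⟨equation ht hg, Or.inr (ne_negY ht hg)⟩

def point (ht : t ^ 3 + t ^ 2 - 2 * t - 1 = 0) (hg : g ^ 2 = -7) : (E71 K).toAffine.Point :=
  .some _ _ (nonsingular ht hg)

lemma point_congr {t' : K} (ht : t ^ 3 + t ^ 2 - 2 * t - 1 = 0)
    (ht' : t' ^ 3 + t' ^ 2 - 2 * t' - 1 = 0) (hg : g ^ 2 = -7) (h : t = t') :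
    point ht hg = point ht' hg := by
  subst h
  rfl

variable [DecidableEq K]

/-- The tangent slope `(3x² - 2835) / (2y)`, using `t⁻¹ = t² + t - 2` and `g⁻¹ = -g / 7`. -/
lemma slope_point (ht : t ^ 3 + t ^ 2 - 2 * t - 1 = 0) (hg : g ^ 2 = -7) :
    (E71 K).toAffine.slope (36 * t - 9) (36 * t - 9) (108 * t * g) (108 * t * g) =
      3 / 7 * g * (4 * t ^ 2 - 2 * t - 5) := by
  have hy := ne_negY ht hg
  rw [slope_of_Y_ne rfl hy, div_eq_iff (sub_ne_zero_of_ne hy)]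
  simp only [negY, E71]
  linear_combination -648 / 7 * t * (4 * t ^ 2 - 2 * t - 5) * hg + 2592 * ht

lemma two_nsmul_point (ht : t ^ 3 + t ^ 2 - 2 * t - 1 = 0) (hg : g ^ 2 = -7) :
    2 • point ht hg = point (cubic_one_sub_sub_sq ht) hg := by
  unfold point
  rw [two_nsmul, Point.add_self_of_Y_ne (ne_negY ht hg), Point.some.injEq, slope_point ht hg]
  have hx : (E71 K).toAffine.addX (36 * t - 9) (36 * t - 9) (3 / 7 * g * (4 * t ^ 2 - 2 * t - 5)) =
      36 * (1 - t - t ^ 2) - 9 := by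
    simp only [addX, E71]
    linear_combination 9 / 49 * (4 * t ^ 2 - 2 * t - 5) ^ 2 * hg + (288 / 7 - 144 / 7 * t) * ht
  refine ⟨hx, ?_⟩
  rw [addY, negAddY, hx]
  simp only [negY, E71]
  linear_combination (216 / 7 + 432 / 7 * t) * g * ht

lemma eight_nsmul_point (ht : t ^ 3 + t ^ 2 - 2 * t - 1 = 0) (hg : g ^ 2 = -7) :
    8 • point ht hg = point ht hg := by
  rw [show 8 = 2 * 2 * 2 from rfl, mul_nsmul, mul_nsmul, two_nsmul_point, two_nsmul_point,
    two_nsmul_point]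
  apply point_congr
  linear_combination (-1 + 6 * t ^ 2 + t ^ 3 - 3 * t ^ 4 - t ^ 5) * ht

lemma addOrderOf_point (ht : t ^ 3 + t ^ 2 - 2 * t - 1 = 0) (hg : g ^ 2 = -7) :
    addOrderOf (point ht hg) = 7 := by
  have : Fact (Nat.Prime 7) := ⟨by norm_num⟩
  refine addOrderOf_eq_prime ?_ (Point.some_ne_zero _)
  have h8 := eight_nsmul_point ht hg
  rwa [show 8 = 7 + 1 from rfl, succ_nsmul, add_eq_right] at h8

end Point

end E71

/-- The quadratic Gauss sum `∑ₐ (a/7) ζᵃ`; the quadratic residues mod `7` are `1, 2, 4`. -/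
def gaussSumSeven {L : Type*} [Field L] (ζ : L) : L :=
  ζ + ζ ^ 2 + ζ ^ 4 - ζ ^ 3 - ζ ^ 5 - ζ ^ 6

namespace IsPrimitiveRoot

variable {L : Type*} [Field L] {ζ : L}

lemma geom_sum_seven (hζ : IsPrimitiveRoot ζ 7) :
    ζ ^ 6 + ζ ^ 5 + ζ ^ 4 + ζ ^ 3 + ζ ^ 2 + ζ + 1 = 0 := by
  have h := hζ.geom_sum_eq_zero (by norm_num)
  simp only [Finset.sum_range_succ, Finset.sum_range_zero] at h
  linear_combination h

lemma inv_eq_pow_six (hζ : IsPrimitiveRoot ζ 7) : ζ⁻¹ = ζ ^ 6 :=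
  inv_eq_of_mul_eq_one_left (by rw [← pow_succ, hζ.pow_eq_one])

lemma add_inv_cubic (hζ : IsPrimitiveRoot ζ 7) :
    (ζ + ζ⁻¹) ^ 3 + (ζ + ζ⁻¹) ^ 2 - 2 * (ζ + ζ⁻¹) - 1 = 0 := by
  rw [hζ.inv_eq_pow_six]
  linear_combination (2 + 3 * ζ + ζ ^ 4 + ζ ^ 5 + 3 * ζ ^ 6 + ζ ^ 11) * hζ.pow_eq_one +
    hζ.geom_sum_seven

lemma gaussSumSeven_sq (hζ : IsPrimitiveRoot ζ 7) : gaussSumSeven ζ ^ 2 = -7 := by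
  unfold gaussSumSeven
  linear_combination (-6 + ζ - ζ ^ 3 + 2 * ζ ^ 4 + ζ ^ 5) * hζ.pow_eq_one + hζ.geom_sum_seven

lemma fourteen_mul_eq (hζ : IsPrimitiveRoot ζ 7) :
    14 * ζ =
      7 * (ζ + ζ⁻¹) + (6 + (ζ + ζ⁻¹) - 2 * (ζ + ζ⁻¹) ^ 2) * gaussSumSeven ζ := by
  rw [hζ.inv_eq_pow_six]
  unfold gaussSumSeven
  linear_combination (-ζ + 7 * ζ ^ 2 - 7 * ζ ^ 3 + 3 * ζ ^ 4 - 3 * ζ ^ 5 - 2 * ζ ^ 6 +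
    2 * ζ ^ 7 - 2 * ζ ^ 8 + 2 * ζ ^ 9 - 2 * ζ ^ 10 - 2 * ζ ^ 11) * hζ.pow_eq_one

end IsPrimitiveRoot

section Adjoin

variable {L : Type*} [Field L] [CharZero L]

lemma adjoin_thirty_six_mul_sub_nine (t : L) : ℚ⟮36 * t - 9⟯ = ℚ⟮t⟯ := by
  apply le_antisymm <;> rw [adjoin_simple_le_iff]
  · exact sub_mem (mul_mem (ofNat_mem _ 36) (mem_adjoin_simple_self ℚ t)) (ofNat_mem _ 9)
  · have h := div_mem (add_mem (mem_adjoin_simple_self ℚ (36 * t - 9)) (ofNat_mem _ 9))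
      (ofNat_mem _ 36)
    rwa [sub_add_cancel, mul_div_cancel_left₀ _ (by norm_num)] at h

lemma adjoin_thirty_six_mul_sub_nine_pair {t g : L} (ht : t ≠ 0) :
    adjoin ℚ {36 * t - 9, 108 * t * g} = adjoin ℚ {t, g} := by
  apply le_antisymm <;> rw [adjoin_le_iff, Set.insert_subset_iff, Set.singleton_subset_iff]
  · have ht' := subset_adjoin ℚ {t, g} (Set.mem_insert t {g})
    have hg' := subset_adjoin ℚ {t, g} (Set.mem_insert_of_mem t rfl)
    exact ⟨sub_mem (mul_mem (ofNat_mem _ 36) ht') (ofNat_mem _ 9),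
      mul_mem (mul_mem (ofNat_mem _ 108) ht') hg'⟩
  · have hx := subset_adjoin ℚ {36 * t - 9, 108 * t * g} (Set.mem_insert _ _)
    have hy := subset_adjoin ℚ {36 * t - 9, 108 * t * g} (Set.mem_insert_of_mem _ rfl)
    have ht' := div_mem (add_mem hx (ofNat_mem _ 9)) (ofNat_mem _ 36)
    rw [sub_add_cancel, mul_div_cancel_left₀ _ (by norm_num)] at ht'
    have hg' := div_mem hy (mul_mem (ofNat_mem _ 108) ht')
    rw [mul_div_cancel_left₀ _ (mul_ne_zero (by norm_num) ht)] at hg'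
    exact ⟨ht', hg'⟩

lemma IsPrimitiveRoot.adjoin_add_inv_gaussSumSeven {ζ : L} (hζ : IsPrimitiveRoot ζ 7) :
    adjoin ℚ {ζ + ζ⁻¹, gaussSumSeven ζ} = ℚ⟮ζ⟯ := by
  apply le_antisymm
  · rw [adjoin_le_iff, Set.insert_subset_iff, Set.singleton_subset_iff]
    have h := mem_adjoin_simple_self ℚ ζ
    refine ⟨add_mem h (inv_mem h), ?_⟩
    unfold gaussSumSeven
    exact sub_mem (sub_mem (sub_mem (add_mem (add_mem h (pow_mem h 2)) (pow_mem h 4))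
      (pow_mem h 3)) (pow_mem h 5)) (pow_mem h 6)
  · rw [adjoin_simple_le_iff]
    have ht := subset_adjoin ℚ {ζ + ζ⁻¹, gaussSumSeven ζ} (Set.mem_insert _ _)
    have hg := subset_adjoin ℚ {ζ + ζ⁻¹, gaussSumSeven ζ} (Set.mem_insert_of_mem _ rfl)
    have h := div_mem (add_mem (mul_mem (ofNat_mem _ 7) ht) (mul_mem (sub_mem
      (add_mem (ofNat_mem _ 6) ht) (mul_mem (ofNat_mem _ 2) (pow_mem ht 2))) hg)) (ofNat_mem _ 14)
    rwa [← hζ.fourteen_mul_eq, mul_div_cancel_left₀ _ (by norm_num)] at h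

end Adjoin

/-- The CM curve `E_{7,1} : y² = x³ − 2835x − 71442` has a point `P = (x₀, y₀)` of
exact order `7` with `ℚ(x₀) = ℚ(ζ + ζ⁻¹)` and `ℚ(x₀, y₀) = ℚ(ζ)`, the full 7th
cyclotomic field, where `ζ = e^{2πi/7}`; in particular `ℚ(√−7) ⊆ ℚ(x₀, y₀)`. -/
theorem seven_torsion_field_E_7_1
    (E : WeierstrassCurve ℚ) (hE : E = ⟨0, 0, 0, -2835, -71442⟩)
    (ζ : ℂ) (hζ : ζ = Complex.exp (2 * Real.pi * Complex.I / 7)) :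
    ∃ (x₀ y₀ : ℂ) (h : (E.baseChange ℂ).toAffine.Nonsingular x₀ y₀),
      addOrderOf (Point.some x₀ y₀ h : (E.baseChange ℂ).toAffine.Point) = 7 ∧
      IntermediateField.adjoin ℚ {x₀} = IntermediateField.adjoin ℚ {ζ + ζ⁻¹} ∧
      IntermediateField.adjoin ℚ {x₀, y₀} = IntermediateField.adjoin ℚ {ζ} ∧
      ∃ c ∈ IntermediateField.adjoin ℚ {x₀, y₀}, c ^ 2 = (-7 : ℂ) := by
  have hζ₇ : IsPrimitiveRoot ζ 7 := by
    simpa [hζ] using Complex.isPrimitiveRoot_exp 7 (by norm_num)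
  have hE' : E.baseChange ℂ = E71 ℂ := by
    subst hE
    ext <;> simp [E71]
  rw [hE']
  have ht := hζ₇.add_inv_cubic
  have hg := hζ₇.gaussSumSeven_sq
  have hxy := adjoin_thirty_six_mul_sub_nine_pair (g := gaussSumSeven ζ) (E71.ne_zero_of_cubic ht)
  refine ⟨_, _, E71.nonsingular ht hg, E71.addOrderOf_point ht hg,
    adjoin_thirty_six_mul_sub_nine _, hxy.trans hζ₇.adjoin_add_inv_gaussSumSeven,
    gaussSumSeven ζ, ?_, hg⟩
  rw [hxy]
  exact subset_adjoin ℚ _ (Set.mem_insert_of_mem _ rfl)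
end

section
/- Let d be a nonzero rational number and let E be the elliptic curve over ℚ given by y² = x³ − 595d²x + 5586d³ (a quadratic twist of the CM curve E_{7,2}). Let ζ = e^{2πi/7} and let F ⊆ ℂ be the subfield ℚ(ζ + ζ⁻¹, √(7d)). Then there exists a point P ∈ E(ℂ) of exact order 7 whose coordinates lie in F. -/
/-!
Write c = ζ + ζ⁻¹, a root of c³ + c² − 2c − 1, and let s² = 7d. The point
P(c) = (d(13 − 4c + 4c²), ds(4 + 12c − 12c²)) lies on the twist for every root c, and doubling
sends P(c) to P(σc), where σ is the Galois automorphism ζ ↦ ζ⁴ of ℚ(ζ + ζ⁻¹). Since σ has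
order 3, 8P = P, so P is a nonzero point killed by the prime 7.
-/

open WeierstrassCurve WeierstrassCurve.Affine

lemma IsPrimitiveRoot.add_inv_cubic_eq_zero {K : Type*} [Field K] {ζ : K}
    (h : IsPrimitiveRoot ζ 7) :
    (ζ + ζ⁻¹) ^ 3 + (ζ + ζ⁻¹) ^ 2 - 2 * (ζ + ζ⁻¹) - 1 = 0 := by
  have hζ0 : ζ ≠ 0 := h.ne_zero (by norm_num)
  have hΦ := h.geom_sum_eq_zero (by norm_num)
  simp only [Finset.sum_range_succ, Finset.sum_range_zero] at hΦ
  calc _ = ζ⁻¹ ^ 3 * (0 + ζ ^ 0 + ζ ^ 1 + ζ ^ 2 + ζ ^ 3 + ζ ^ 4 + ζ ^ 5 + ζ ^ 6) := by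
          field_simp; ring
    _ = 0 := by rw [hΦ, mul_zero]

section CommRing

variable {R : Type*} [CommRing R] {c d s : R}

/-- `ζ + ζ⁻¹ ↦ ζ⁴ + ζ⁻⁴` -/
def sigmaFour (c : R) : R := 1 - c - c ^ 2

lemma sigmaFour_cubic (hc : c ^ 3 + c ^ 2 - 2 * c - 1 = 0) :
    sigmaFour c ^ 3 + sigmaFour c ^ 2 - 2 * sigmaFour c - 1 = 0 := by
  unfold sigmaFour
  linear_combination (1 + c - 2 * c ^ 2 - c ^ 3) * hc

lemma sigmaFour_sigmaFour_sigmaFour (hc : c ^ 3 + c ^ 2 - 2 * c - 1 = 0) :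
    sigmaFour (sigmaFour (sigmaFour c)) = c := by
  unfold sigmaFour
  linear_combination (-1 + 6 * c ^ 2 + c ^ 3 - 3 * c ^ 4 - c ^ 5) * hc

namespace WeierstrassCurve

def twistE72 (d : R) : WeierstrassCurve R := ⟨0, 0, 0, -595 * d ^ 2, 5586 * d ^ 3⟩

lemma twistE72_baseChange {A : Type*} [CommRing A] [Algebra R A] (d : R) :
    (twistE72 d).baseChange A = twistE72 (algebraMap R A d) := by
  simp [twistE72, baseChange, map, map_ofNat]

def sevenTorsionX (d c : R) : R := d * (13 - 4 * c + 4 * c ^ 2)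

def sevenTorsionY (d s c : R) : R := d * s * (4 + 12 * c - 12 * c ^ 2)

lemma equation_sevenTorsion (hc : c ^ 3 + c ^ 2 - 2 * c - 1 = 0) (hs : s ^ 2 = 7 * d) :
    (twistE72 d).toAffine.Equation (sevenTorsionX d c) (sevenTorsionY d s c) := by
  rw [equation_iff]
  simp only [twistE72, sevenTorsionX, sevenTorsionY]
  linear_combination (-64 - 192 * c + 256 * c ^ 2 - 64 * c ^ 3) * d ^ 3 * hc +
    (16 + 96 * c + 48 * c ^ 2 - 288 * c ^ 3 + 144 * c ^ 4) * d ^ 2 * hs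

lemma sevenTorsionX_mem {S : Type*} [SetLike S R] [SubringClass S R] {F : S} (hd : d ∈ F)
    (hc : c ∈ F) : sevenTorsionX d c ∈ F := by
  unfold sevenTorsionX
  apply_rules [mul_mem, add_mem, sub_mem, pow_mem, ofNat_mem]

lemma sevenTorsionY_mem {S : Type*} [SetLike S R] [SubringClass S R] {F : S} (hd : d ∈ F)
    (hs : s ∈ F) (hc : c ∈ F) : sevenTorsionY d s c ∈ F := by
  unfold sevenTorsionY
  apply_rules [mul_mem, add_mem, sub_mem, pow_mem, ofNat_mem]

end WeierstrassCurve

end CommRing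

section Field

variable {K : Type*} [Field K] [CharZero K] {c d s : K}

namespace WeierstrassCurve

lemma sevenTorsionY_ne_zero (hd : d ≠ 0) (hc : c ^ 3 + c ^ 2 - 2 * c - 1 = 0)
    (hs : s ^ 2 = 7 * d) : sevenTorsionY d s c ≠ 0 := by
  have hs0 : s ≠ 0 := by rintro rfl; simp_all
  have hunit : (4 + 12 * c - 12 * c ^ 2) * (1 / 4 + 3 / 2 * c + 3 / 4 * c ^ 2) = 1 := by
    linear_combination -9 * c * hc
  exact mul_ne_zero (mul_ne_zero hd hs0) (left_ne_zero_of_mul_eq_one hunit)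

lemma sevenTorsionY_ne_negY (hd : d ≠ 0) (hc : c ^ 3 + c ^ 2 - 2 * c - 1 = 0)
    (hs : s ^ 2 = 7 * d) :
    sevenTorsionY d s c ≠
      (twistE72 d).toAffine.negY (sevenTorsionX d c) (sevenTorsionY d s c) := by
  simp only [negY, twistE72, zero_mul, sub_zero]
  intro h
  exact sevenTorsionY_ne_zero hd hc hs (by linear_combination h / 2)

lemma nonsingular_sevenTorsion (hd : d ≠ 0) (hc : c ^ 3 + c ^ 2 - 2 * c - 1 = 0)
    (hs : s ^ 2 = 7 * d) :
    (twistE72 d).toAffine.Nonsingular (sevenTorsionX d c) (sevenTorsionY d s c) :=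
  (nonsingular_iff _ _).mpr
    ⟨equation_sevenTorsion hc hs, Or.inr (sevenTorsionY_ne_negY hd hc hs)⟩

def sevenTorsionPoint (hd : d ≠ 0) (hc : c ^ 3 + c ^ 2 - 2 * c - 1 = 0)
    (hs : s ^ 2 = 7 * d) : (twistE72 d).toAffine.Point :=
  .some _ _ (nonsingular_sevenTorsion hd hc hs)

lemma sevenTorsionPoint_congr {c' : K} (hd : d ≠ 0) (hc : c ^ 3 + c ^ 2 - 2 * c - 1 = 0)
    (hc' : c' ^ 3 + c' ^ 2 - 2 * c' - 1 = 0) (hs : s ^ 2 = 7 * d) (h : c = c') :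
    sevenTorsionPoint hd hc hs = sevenTorsionPoint hd hc' hs := by
  subst h; rfl

variable [DecidableEq K]

lemma sevenTorsionPoint_add_self (hd : d ≠ 0) (hc : c ^ 3 + c ^ 2 - 2 * c - 1 = 0)
    (hs : s ^ 2 = 7 * d) :
    sevenTorsionPoint hd hc hs + sevenTorsionPoint hd hc hs =
      sevenTorsionPoint hd (sigmaFour_cubic hc) hs := by
  set W := (twistE72 d).toAffine
  have hy := sevenTorsionY_ne_negY hd hc hs
  have hslope : W.slope (sevenTorsionX d c) (sevenTorsionX d c) (sevenTorsionY d s c)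
      (sevenTorsionY d s c) = s * (-11 + 18 * c + 6 * c ^ 2) / 7 := by
    rw [slope_of_Y_ne rfl hy, div_eq_iff (sub_ne_zero.mpr hy)]
    simp only [negY, twistE72, sevenTorsionX, sevenTorsionY]
    linear_combination 192 * c * d ^ 2 * hc +
      (88 / 7 + 120 / 7 * c - 744 / 7 * c ^ 2 + 288 / 7 * c ^ 3 + 144 / 7 * c ^ 4) * d * hs
  simp only [sevenTorsionPoint, Point.add_self_of_Y_ne hy, Point.some.injEq]
  rw [hslope]
  constructor
  · simp only [addX, twistE72, sevenTorsionX, sigmaFour]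
    linear_combination (152 / 7 + 8 / 7 * c) * d * hc +
      (121 / 49 - 396 / 49 * c + 192 / 49 * c ^ 2 + 216 / 49 * c ^ 3 + 36 / 49 * c ^ 4) * hs
  · simp only [addY, negAddY, addX, negY, twistE72, sevenTorsionX, sevenTorsionY,
      sigmaFour]
    linear_combination
      (2064 / 49 - 2256 / 49 * c - 1728 / 49 * c ^ 2 - 216 / 49 * c ^ 3) * d * s * hc +
      (1331 / 343 - 6534 / 343 * c + 8514 / 343 * c ^ 2 + 1296 / 343 * c ^ 3 -
        4644 / 343 * c ^ 4 - 1944 / 343 * c ^ 5 - 216 / 343 * c ^ 6) * s * hs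

lemma eight_nsmul_sevenTorsionPoint (hd : d ≠ 0) (hc : c ^ 3 + c ^ 2 - 2 * c - 1 = 0)
    (hs : s ^ 2 = 7 * d) : 8 • sevenTorsionPoint hd hc hs = sevenTorsionPoint hd hc hs := by
  have h8 (P : (twistE72 d).toAffine.Point) : 8 • P = P + P + (P + P) + (P + P + (P + P)) := by
    abel
  rw [h8, sevenTorsionPoint_add_self, sevenTorsionPoint_add_self, sevenTorsionPoint_add_self]
  exact sevenTorsionPoint_congr _ _ _ _ (sigmaFour_sigmaFour_sigmaFour hc)

lemma addOrderOf_sevenTorsionPoint (hd : d ≠ 0) (hc : c ^ 3 + c ^ 2 - 2 * c - 1 = 0)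
    (hs : s ^ 2 = 7 * d) : addOrderOf (sevenTorsionPoint hd hc hs) = 7 := by
  have : Fact (Nat.Prime 7) := ⟨by norm_num⟩
  refine addOrderOf_eq_prime ?_ (Point.some_ne_zero _)
  have h := eight_nsmul_sevenTorsionPoint hd hc hs
  rwa [succ_nsmul, add_eq_right] at h

end WeierstrassCurve

end Field

/-- For a nonzero rational `d`, the quadratic twist `E^d : y² = x³ − 595d²x + 5586d³`
of the CM curve `E_{7,2}` has a point of exact order `7` whose coordinates lie in
`ℚ(ζ + ζ⁻¹, √(7d))`, where `ζ = e^{2πi/7}` and `√(7d)` is a complex square root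
of `7d`. -/
theorem seven_torsion_point_twist_E_7_2 (d : ℚ) (hd : d ≠ 0)
    (E : WeierstrassCurve ℚ) (hE : E = ⟨0, 0, 0, -595 * d ^ 2, 5586 * d ^ 3⟩)
    (ζ : ℂ) (hζ : ζ = Complex.exp (2 * Real.pi * Complex.I / 7))
    (s : ℂ) (hs : s ^ 2 = ((7 * d : ℚ) : ℂ)) :
    ∃ (x₀ y₀ : ℂ) (h : (E.baseChange ℂ).toAffine.Nonsingular x₀ y₀),
      addOrderOf (Point.some x₀ y₀ h : (E.baseChange ℂ).toAffine.Point) = 7 ∧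
      x₀ ∈ IntermediateField.adjoin ℚ {ζ + ζ⁻¹, s} ∧
      y₀ ∈ IntermediateField.adjoin ℚ {ζ + ζ⁻¹, s} := by
  have hc : (ζ + ζ⁻¹) ^ 3 + (ζ + ζ⁻¹) ^ 2 - 2 * (ζ + ζ⁻¹) - 1 = 0 :=
    IsPrimitiveRoot.add_inv_cubic_eq_zero <| by
      simpa [hζ] using Complex.isPrimitiveRoot_exp 7 (by norm_num)
  have hd' : algebraMap ℚ ℂ d ≠ 0 := by simpa using hd
  have hs' : s ^ 2 = 7 * algebraMap ℚ ℂ d := by rw [hs]; simp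
  have hE' : E.baseChange ℂ = twistE72 (algebraMap ℚ ℂ d) := hE ▸ twistE72_baseChange d
  rw [hE']
  set F := IntermediateField.adjoin ℚ {ζ + ζ⁻¹, s}
  have hcF : ζ + ζ⁻¹ ∈ F := IntermediateField.subset_adjoin ℚ _ (Set.mem_insert _ _)
  have hsF : s ∈ F := IntermediateField.subset_adjoin ℚ _ (Set.mem_insert_of_mem _ rfl)
  have hdF : algebraMap ℚ ℂ d ∈ F := F.algebraMap_mem d
  exact ⟨_, _, nonsingular_sevenTorsion hd' hc hs', addOrderOf_sevenTorsionPoint hd' hc hs',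
    sevenTorsionX_mem hdF hcF, sevenTorsionY_mem hdF hsF hcF⟩
end

section
/- Let E be the elliptic curve over ℚ given by y² = x³ − 15x + 22 (the CM curve E_{3,2}). Then the subfield of ℂ generated over ℚ by the coordinates of all points P ∈ E(ℂ) with 3P = O equals ℚ(√−3, 2^{1/3}), where 2^{1/3} is the real cube root of 2; that is, ℚ(E[3]) = ℚ(√−3, ∛2). -/
/-!
A point `P = (x, y) ≠ O` is `3`-torsion iff `2P = -P`, i.e. iff `y ≠ -y` and `ψ₃(x) = 0`. For `E₃₂`,
`ψ₃ = 3 (x - 3) (x³ + 3x² - 21x + 25)`; Cardano's formula with `p = -2c`, `q = -2c²`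
(so `pq = 8`, `p³ + q³ = -48`) gives the roots of the cubic as `-1 - 2c - 2c²` for the three cube
roots `c` of `2`, with `y = ±2√-3 (1 + c + c²)`, while `x = 3` gives `y = ±2`. Hence all coordinates
lie in `ℚ(√-3, ∛2)`; conversely, the point attached to `c = ∛2` gives back `c = (3 - x) / (1 - x)`
and `√-3 = y / (2 (1 + c + c²))`.
-/

open WeierstrassCurve WeierstrassCurve.Affine Polynomial

namespace WeierstrassCurve.Affine

variable {F : Type*} [Field F] [DecidableEq F] {W : WeierstrassCurve.Affine F} {x y : F}

lemma addX_slope_self_eq_self_iff (h : W.Equation x y) (hy : y ≠ W.negY x y) :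
    W.addX x x (W.slope x x y y) = x ↔ W.Ψ₃.eval x = 0 := by
  have hd : y - W.negY x y ≠ 0 := sub_ne_zero.mpr hy
  have key : (W.addX x x (W.slope x x y y) - x) * (y - W.negY x y) ^ 2 = -W.Ψ₃.eval x := by
    rw [equation_iff] at h
    rw [slope_of_Y_ne rfl hy, addX]
    field_simp
    simp only [Ψ₃, negY, b₂, b₄, b₆, b₈, eval_add, eval_mul, eval_pow, eval_C, eval_X, eval_ofNat]
    linear_combination (-(W.a₁ ^ 2 + 4 * W.a₂ + 12 * x)) * h
  rw [← sub_eq_zero, ← mul_left_inj' (pow_ne_zero 2 hd), key, zero_mul, neg_eq_zero]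

lemma Point.three_smul_some_eq_zero_iff (h : W.Nonsingular x y) :
    3 • Point.some x y h = 0 ↔ y ≠ W.negY x y ∧ W.Ψ₃.eval x = 0 := by
  have h3 : 3 • Point.some x y h = Point.some x y h + Point.some x y h + Point.some x y h := by
    rw [succ_nsmul, two_nsmul]
  by_cases hy : y = W.negY x y
  · rw [h3, Point.add_self_of_Y_eq hy, zero_add]
    exact iff_of_false (Point.some_ne_zero h) fun h' => h'.1 hy
  · have h2 := Point.add_self_of_Y_ne hy (h₁ := h)
    have hne : Point.some x y h + Point.some x y h ≠ Point.some x y h := fun hP =>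
      Point.some_ne_zero h (add_eq_right.mp hP)
    rw [h2] at hne
    rw [h3, h2, add_eq_zero_iff_eq_neg, and_iff_right hy]
    exact (Point.X_eq_iff.trans (or_iff_right hne)).symm.trans (addX_slope_self_eq_self_iff h.1 hy)

end WeierstrassCurve.Affine

theorem cardano_factorization {R : Type*} [CommRing R] {ω : R} (hω : ω ^ 2 + ω + 1 = 0)
    (u p q : R) :
    (u - (p + q)) * (u - (ω * p + ω ^ 2 * q)) * (u - (ω ^ 2 * p + ω * q)) =
      u ^ 3 - 3 * p * q * u - (p ^ 3 + q ^ 3) := by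
  have hω3 : ω ^ 3 = 1 := by linear_combination (ω - 1) * hω
  have h : (u - (ω * p + ω ^ 2 * q)) * (u - (ω ^ 2 * p + ω * q)) =
      u ^ 2 + (p + q) * u + (p ^ 2 - p * q + q ^ 2) := by
    linear_combination (p ^ 2 + ω * p * q + q ^ 2) * hω3 + (p * q - u * (p + q)) * hω
  linear_combination (u - (p + q)) * h

abbrev E₃₂ : WeierstrassCurve ℚ := ⟨0, 0, 0, -15, 22⟩

namespace E₃₂

variable {K : Type*} [Field K] {x y c s : K}

/-- For a cube root `c` of `2` and a square root `s` of `-3`, `(torsionX c, torsionY s c)` is a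
`3`-torsion point of `E₃₂`; these are all the `3`-torsion points off the line `x = 3`. -/
def torsionX (c : K) : K := -1 - 2 * c - 2 * c ^ 2

def torsionY (s c : K) : K := 2 * s * (1 + c + c ^ 2)

lemma torsionY_sq (hc : c ^ 3 = 2) (hs : s ^ 2 = -3) :
    torsionY s c ^ 2 = torsionX c ^ 3 - 15 * torsionX c + 22 := by
  unfold torsionX torsionY
  linear_combination (8 * c ^ 3 + 24 * c ^ 2 + 4 * c * s ^ 2 + 36 * c + 8 * s ^ 2 + 48) * hc +
    (12 * c ^ 2 + 16 * c + 20) * hs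

lemma torsionX_cubic_eq_zero (hc : c ^ 3 = 2) :
    torsionX c ^ 3 + 3 * torsionX c ^ 2 - 21 * torsionX c + 25 = 0 := by
  unfold torsionX
  linear_combination (-8 * c ^ 3 - 24 * c ^ 2 - 24 * c - 24) * hc

lemma one_add_add_sq_ne_zero (hc : c ^ 3 = 2) : 1 + c + c ^ 2 ≠ 0 := by
  intro h
  have h1 : (c - 1) * (1 + c + c ^ 2) = 1 := by linear_combination hc
  rw [h, mul_zero] at h1
  exact zero_ne_one h1

lemma eq_torsionX_of_cubic_eq_zero {ω : K} (hω : ω ^ 2 + ω + 1 = 0) (hc : c ^ 3 = 2)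
    (hx : x ^ 3 + 3 * x ^ 2 - 21 * x + 25 = 0) :
    x = torsionX c ∨ x = torsionX (ω * c) ∨ x = torsionX (ω ^ 2 * c) := by
  have hω3 : ω ^ 3 = 1 := by linear_combination (ω - 1) * hω
  have h3 : torsionX (ω ^ 2 * c) = -1 + (ω ^ 2 * (-2 * c) + ω * (-2 * c ^ 2)) := by
    unfold torsionX
    linear_combination (-2 * ω * c ^ 2) * hω3
  have hfac : x ^ 3 + 3 * x ^ 2 - 21 * x + 25 =
      (x - torsionX c) * (x - torsionX (ω * c)) * (x - torsionX (ω ^ 2 * c)) := by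
    rw [h3]
    unfold torsionX
    linear_combination (cardano_factorization hω (x + 1) (-2 * c) (-2 * c ^ 2)).symm +
      (12 * x - 8 * c ^ 3 - 12) * hc
  rw [hfac] at hx
  simpa [sub_eq_zero, or_assoc] using hx

variable [Algebra ℚ K]

lemma baseChange_eq : E₃₂.baseChange K = ⟨0, 0, 0, -15, 22⟩ := by
  ext <;> simp

lemma equation_iff : (E₃₂.baseChange K).toAffine.Equation x y ↔ y ^ 2 = x ^ 3 - 15 * x + 22 := by
  rw [baseChange_eq, Affine.equation_iff]
  constructor <;> intro h <;> linear_combination h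

lemma negY_eq : (E₃₂.baseChange K).toAffine.negY x y = -y := by
  simp [baseChange_eq, negY]

lemma eval_Ψ₃ : (E₃₂.baseChange K).toAffine.Ψ₃.eval x =
    3 * (x - 3) * (x ^ 3 + 3 * x ^ 2 - 21 * x + 25) := by
  simp [baseChange_eq, Ψ₃, b₂, b₄, b₆, b₈]
  ring

lemma nonsingular_of_ne_zero (h : y ^ 2 = x ^ 3 - 15 * x + 22) (hy : y ≠ 0) :
    (E₃₂.baseChange K).toAffine.Nonsingular x y := by
  have := algebraRat.charZero K
  rw [nonsingular_iff', equation_iff, baseChange_eq]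
  exact ⟨h, Or.inr (by simpa using hy)⟩

variable (L : IntermediateField ℚ K)

lemma mem_of_torsionX_mem (hc : c ^ 3 = 2) (hx : torsionX c ∈ L) : c ∈ L := by
  have := algebraRat.charZero K
  have h1 : 1 - torsionX c = 2 * (1 + c + c ^ 2) := by unfold torsionX; ring
  have hc' : c = (3 - torsionX c) / (1 - torsionX c) := by
    rw [eq_div_iff (h1 ▸ mul_ne_zero two_ne_zero (one_add_add_sq_ne_zero hc))]
    unfold torsionX
    linear_combination 2 * hc
  rw [hc']
  exact div_mem (sub_mem (ofNat_mem L 3) hx) (sub_mem (one_mem L) hx)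

lemma mem_of_torsionY_mem (hc : c ^ 3 = 2) (hcL : c ∈ L) (hy : torsionY s c ∈ L) : s ∈ L := by
  have := algebraRat.charZero K
  have hs : s = torsionY s c / (2 * (1 + c + c ^ 2)) := by
    rw [eq_div_iff (mul_ne_zero two_ne_zero (one_add_add_sq_ne_zero hc)), torsionY]
    ring
  rw [hs]
  exact div_mem hy (mul_mem (ofNat_mem L 2) (add_mem (add_mem (one_mem L) hcL) (pow_mem hcL 2)))

variable [DecidableEq K]

lemma three_smul_some_eq_zero_iff (h : (E₃₂.baseChange K).toAffine.Nonsingular x y) :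
    3 • Point.some x y h = 0 ↔ y ≠ 0 ∧ (x = 3 ∨ x ^ 3 + 3 * x ^ 2 - 21 * x + 25 = 0) := by
  have := algebraRat.charZero K
  rw [Point.three_smul_some_eq_zero_iff, negY_eq, eval_Ψ₃, Ne, self_eq_neg]
  simp [sub_eq_zero]

lemma exists_three_smul_some_torsionX_torsionY_eq_zero (hc : c ^ 3 = 2) (hs : s ^ 2 = -3) :
    ∃ h : (E₃₂.baseChange K).toAffine.Nonsingular (torsionX c) (torsionY s c),
      3 • Point.some _ _ h = 0 := by
  have := algebraRat.charZero K
  have hs0 : s ≠ 0 := by rintro rfl; norm_num at hs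
  have hy : torsionY s c ≠ 0 :=
    mul_ne_zero (mul_ne_zero two_ne_zero hs0) (one_add_add_sq_ne_zero hc)
  exact ⟨nonsingular_of_ne_zero (torsionY_sq hc hs) hy,
    (three_smul_some_eq_zero_iff _).2 ⟨hy, Or.inr (torsionX_cubic_eq_zero hc)⟩⟩

variable (K) in
def threeTorsionCoords : Set K :=
  {c | ∃ (x y : K) (h : (E₃₂.baseChange K).toAffine.Nonsingular x y),
    3 • Point.some x y h = 0 ∧ (c = x ∨ c = y)}

lemma coords_mem_of_three_smul_some_eq_zero (hcL : c ∈ L) (hsL : s ∈ L) (hc : c ^ 3 = 2)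
    (hs : s ^ 2 = -3) {h : (E₃₂.baseChange K).toAffine.Nonsingular x y}
    (h3 : 3 • Point.some x y h = 0) : x ∈ L ∧ y ∈ L := by
  have := algebraRat.charZero K
  obtain ⟨-, hx⟩ := (three_smul_some_eq_zero_iff h).1 h3
  have hy2 := equation_iff.1 h.1
  rcases hx with rfl | hx
  · have hy : y ^ 2 = 2 ^ 2 := by linear_combination hy2
    rcases sq_eq_sq_iff_eq_or_eq_neg.1 hy with rfl | rfl <;> constructor <;> aesop
  · set ω := (-1 + s) / 2
    have hω : ω ^ 2 + ω + 1 = 0 := by linear_combination hs / 4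
    have hω3 : ω ^ 3 = 1 := by linear_combination (ω - 1) * hω
    have hωL : ω ∈ L := by aesop
    obtain ⟨c', hc'L, hc', rfl⟩ : ∃ c' ∈ L, c' ^ 3 = 2 ∧ x = torsionX c' := by
      rcases eq_torsionX_of_cubic_eq_zero hω hc hx with hx | hx | hx
      · exact ⟨c, hcL, hc, hx⟩
      · exact ⟨ω * c, mul_mem hωL hcL, by linear_combination c ^ 3 * hω3 + hc, hx⟩
      · exact ⟨ω ^ 2 * c, by aesop, by linear_combination (c ^ 3 * (ω ^ 3 + 1)) * hω3 + hc, hx⟩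
    have hy : y ^ 2 = torsionY s c' ^ 2 := hy2.trans (torsionY_sq hc' hs).symm
    refine ⟨by unfold torsionX; aesop, ?_⟩
    rcases sq_eq_sq_iff_eq_or_eq_neg.1 hy with rfl | rfl <;> unfold torsionY <;> aesop

lemma adjoin_threeTorsionCoords_le (hcL : c ∈ L) (hsL : s ∈ L) (hc : c ^ 3 = 2)
    (hs : s ^ 2 = -3) : IntermediateField.adjoin ℚ (threeTorsionCoords K) ≤ L := by
  rw [IntermediateField.adjoin_le_iff]
  rintro _ ⟨x, y, h, h3, rfl | rfl⟩
  · exact (coords_mem_of_three_smul_some_eq_zero L hcL hsL hc hs h3).1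
  · exact (coords_mem_of_three_smul_some_eq_zero L hcL hsL hc hs h3).2

lemma mem_adjoin_threeTorsionCoords (hc : c ^ 3 = 2) (hs : s ^ 2 = -3) :
    c ∈ IntermediateField.adjoin ℚ (threeTorsionCoords K) ∧
      s ∈ IntermediateField.adjoin ℚ (threeTorsionCoords K) := by
  obtain ⟨h, h3⟩ := exists_three_smul_some_torsionX_torsionY_eq_zero hc hs
  have hx := IntermediateField.subset_adjoin ℚ (threeTorsionCoords K) ⟨_, _, h, h3, Or.inl rfl⟩
  have hy := IntermediateField.subset_adjoin ℚ (threeTorsionCoords K) ⟨_, _, h, h3, Or.inr rfl⟩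
  have hcL := mem_of_torsionX_mem _ hc hx
  exact ⟨hcL, mem_of_torsionY_mem _ hc hcL hy⟩

end E₃₂

/-- For the CM curve `E_{3,2} : y² = x³ − 15x + 22`, the field generated over `ℚ` by the
coordinates of all points `P ∈ E(ℂ)` with `3P = O` is `ℚ(√−3, ∛2)`, where `∛2` is the
real cube root of `2` and `√−3` is any complex square root of `−3`. -/
theorem three_torsion_field_E_3_2
    (E : WeierstrassCurve ℚ) (hE : E = ⟨0, 0, 0, -15, 22⟩)
    (t : ℂ) (ht : t ^ 2 = -3) :
    IntermediateField.adjoin ℚ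
        {c : ℂ | ∃ (x y : ℂ) (h : (E.baseChange ℂ).toAffine.Nonsingular x y),
          3 • (Point.some x y h : (E.baseChange ℂ).toAffine.Point) = 0 ∧ (c = x ∨ c = y)} =
      IntermediateField.adjoin ℚ {t, (((2 : ℝ) ^ ((1 : ℝ) / 3) : ℝ) : ℂ)} := by
  subst hE
  set c : ℂ := (((2 : ℝ) ^ ((1 : ℝ) / 3) : ℝ) : ℂ)
  have hc : c ^ 3 = 2 := by
    rw [← Complex.ofReal_pow, ← Real.rpow_natCast, ← Real.rpow_mul zero_le_two]
    norm_num
  change IntermediateField.adjoin ℚ (E₃₂.threeTorsionCoords ℂ) = _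
  have hc_gen := IntermediateField.subset_adjoin ℚ {t, c} (Set.mem_insert_of_mem t rfl)
  have ht_gen := IntermediateField.subset_adjoin ℚ {t, c} (Set.mem_insert t {c})
  obtain ⟨hc_tors, ht_tors⟩ := E₃₂.mem_adjoin_threeTorsionCoords hc ht
  refine le_antisymm (E₃₂.adjoin_threeTorsionCoords_le _ hc_gen ht_gen hc ht) ?_
  rw [IntermediateField.adjoin_le_iff, Set.insert_subset_iff, Set.singleton_subset_iff]
  exact ⟨ht_tors, hc_tors⟩
end
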